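/- Let s ≥ 1 and d ≥ 1 be integers, λ a real number, and U_1, …, U_{s-1} unitary d×d complex matrices. On ℂ^d ⊗ ℂ^s define the Hamiltonian H = -(λ/2) Σ_{x=1}^{s-1} ( U_x ⊗ |x+1⟩⟨x| + U_x⁻¹ ⊗ |x⟩⟨x+1| ). For k = 1, …, s set v_k(x) = sqrt(2/(s+1)) · sin(kπx/(s+1)). Then for every vector r ∈ ℂ^d and every k ∈ {1,…,s}, the vector |e_k; r⟩ = Σ_{x=1}^{s} v_k(x) (U_{x-1}·…·U_2·U_1 r) ⊗ e_x (with the empty product U_0·…·U_1 = I for x = 1) is an eigenvector of H with eigenvalue e_k = -λ cos(kπ/(s+1)). -/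

import Mathlib

/-!
Conjugating by the gauge factors `prodU U x = U_x ⋯ U_1` strips the unitaries off the hops:
`U_{x+1} (U_x ⋯ U_1) = U_{x+1} ⋯ U_1` and, by unitarity, `U_{x+1}⁻¹ (U_{x+1} ⋯ U_1) = U_x ⋯ U_1`.
Hence `H` acts on `|e_k; r⟩` as `-(λ/2)` times the adjacency matrix of the path on `s` sites
acts on `v_k`. The sine profile satisfies `v(x - 1) + v(x + 1) = 2 cos (kπ/(s+1)) v(x)` and
vanishes at the ghost sites `0` and `s + 1`, so the end sites of the path need no special care.
-/
open Kronecker Matrix Real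

/-- The ordered product `U_x · … · U_2 · U_1` (with `prodU U 0 = I`). -/
noncomputable def prodU {d : ℕ} (U : ℕ → Matrix (Fin d) (Fin d) ℂ) : ℕ → Matrix (Fin d) (Fin d) ℂ
  | 0 => 1
  | x + 1 => U (x + 1) * prodU U x

section Kronecker

variable {R m n p q : Type*} [Semiring R] [Fintype n] [Fintype q] [DecidableEq p] [DecidableEq q]

theorem kronecker_single_one_mulVec_apply (M : Matrix m n R) (a : p) (b : q)
    (v : n × q → R) (i : m) (y : p) :
    ((M ⊗ₖ single a b (1 : R)) *ᵥ v) (i, y) =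
      if y = a then (M *ᵥ fun j => v (j, b)) i else 0 := by
  simp only [mulVec, dotProduct, kroneckerMap_apply, single_apply, Fintype.sum_prod_type]
  split_ifs with h
  · subst h
    simp [mul_ite, ite_mul]
  · simp [Ne.symm h]

end Kronecker

section Hopping

variable {R ι : Type*} [Semiring R] [Fintype ι]

def hopping (s : ℕ) (T S : ℕ → Matrix ι ι R) : Matrix (ι × Fin s) (ι × Fin s) R :=
  ∑ x : Fin (s - 1),
    (T (x + 1) ⊗ₖ single (⟨x + 1, by omega⟩ : Fin s) (⟨x, by omega⟩ : Fin s) 1 +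
      S (x + 1) ⊗ₖ single (⟨x, by omega⟩ : Fin s) (⟨x + 1, by omega⟩ : Fin s) 1)

theorem Fin.sum_ite_val_eq {M : Type*} [AddCommMonoid M] (n m : ℕ) (f : ℕ → M) :
    ∑ x : Fin n, (if (x : ℕ) = m then f x else 0) = if m < n then f m else 0 := by
  rw [Fin.sum_univ_eq_sum_range (fun x => if x = m then f x else 0), Finset.sum_ite_eq']
  simp only [Finset.mem_range]

theorem hopping_mulVec_apply (s : ℕ) (T S : ℕ → Matrix ι ι R) (g : ℕ → ι → R) (i : ι)
    (y : Fin s) :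
    (hopping s T S *ᵥ fun p => g p.2 p.1) (i, y) =
      (if 0 < (y : ℕ) then (T y *ᵥ g (y - 1)) i else 0) +
        (if (y : ℕ) + 1 < s then (S (y + 1) *ᵥ g (y + 1)) i else 0) := by
  classical
  simp only [hopping, sum_mulVec, add_mulVec, Finset.sum_apply, Pi.add_apply,
    kronecker_single_one_mulVec_apply, Finset.sum_add_distrib, Fin.ext_iff]
  congr 1
  · obtain ⟨y, hy⟩ := y
    cases y with
    | zero => simp
    | succ m =>
      simp only [Nat.succ_inj, eq_comm (a := m)]
      rw [Fin.sum_ite_val_eq _ _ fun x => (T (x + 1) *ᵥ g x) i]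
      simp [show m < s - 1 by omega]
  · simp only [eq_comm (a := (y : ℕ))]
    rw [Fin.sum_ite_val_eq _ _ fun x => (S (x + 1) *ᵥ g (x + 1)) i]
    simp only [Nat.lt_sub_iff_add_lt]

end Hopping

section SineMode

noncomputable def sineMode (s k : ℕ) (t : ℝ) : ℝ :=
  √(2 / (s + 1)) * sin (k * π * t / (s + 1))

variable (s k : ℕ)

theorem sineMode_zero : sineMode s k 0 = 0 := by
  simp [sineMode]

theorem sineMode_self_add_one : sineMode s k (s + 1) = 0 := by
  have : (k * π * (s + 1) / (s + 1) : ℝ) = k * π := by field_simp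
  simp [sineMode, this]

theorem sineMode_sub_one_add_sineMode_add_one (t : ℝ) :
    sineMode s k (t - 1) + sineMode s k (t + 1) = 2 * cos (k * π / (s + 1)) * sineMode s k t := by
  have h := two_mul_sin_mul_cos (k * π * t / (s + 1)) (k * π / (s + 1))
  simp only [sineMode]
  rw [show k * π * (t - 1) / (s + 1) = k * π * t / (s + 1) - k * π / (s + 1) by ring,
    show k * π * (t + 1) / (s + 1) = k * π * t / (s + 1) + k * π / (s + 1) by ring]
  linear_combination -√(2 / (s + 1)) * h

end SineMode

section Gauge

variable {d : ℕ} (U : ℕ → Matrix (Fin d) (Fin d) ℂ)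

theorem prodU_succ (x : ℕ) : prodU U (x + 1) = U (x + 1) * prodU U x := rfl

theorem inv_mul_prodU_succ {x : ℕ} (h : IsUnit (U (x + 1)).det) :
    (U (x + 1))⁻¹ * prodU U (x + 1) = prodU U x :=
  nonsing_inv_mul_cancel_left _ _ h

noncomputable def gaugedAmplitude (s k : ℕ) (r : Fin d → ℂ) (m : ℕ) : Fin d → ℂ :=
  (sineMode s k (m + 1) : ℂ) • (prodU U m *ᵥ r)

noncomputable def gaugedMode (s k : ℕ) (r : Fin d → ℂ) : Fin d × Fin s → ℂ :=
  fun p => gaugedAmplitude U s k r p.2 p.1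

theorem hopping_mulVec_gaugedMode (s k : ℕ) (r : Fin d → ℂ)
    (hU : ∀ x, 1 ≤ x → x ≤ s - 1 → IsUnit (U x).det) :
    hopping s U (fun x => (U x)⁻¹) *ᵥ gaugedMode U s k r =
      ((2 * cos (k * π / (s + 1)) : ℝ) : ℂ) • gaugedMode U s k r := by
  funext ⟨i, ⟨y, hy⟩⟩
  have incoming : (if 0 < y then (U y *ᵥ gaugedAmplitude U s k r (y - 1)) i else 0) =
      sineMode s k y * (prodU U y *ᵥ r) i := by
    cases y with
    | zero => simp [sineMode_zero]
    | succ m => simp [gaugedAmplitude, mulVec_smul, mulVec_mulVec, prodU_succ]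
  have outgoing :
      (if y + 1 < s then ((U (y + 1))⁻¹ *ᵥ gaugedAmplitude U s k r (y + 1)) i else 0) =
      sineMode s k (y + 2) * (prodU U y *ᵥ r) i := by
    split_ifs with h
    · rw [gaugedAmplitude, mulVec_smul, mulVec_mulVec,
        inv_mul_prodU_succ U (hU (y + 1) (by omega) (by omega)),
        show ((y + 1 : ℕ) : ℝ) + 1 = y + 2 by push_cast; ring]
      rfl
    · obtain rfl : y = s - 1 := by omega
      rw [show ((s - 1 : ℕ) : ℝ) + 2 = s + 1 by rw [Nat.cast_sub (by omega)]; ring,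
        sineMode_self_add_one]
      simp
  have recurrence := sineMode_sub_one_add_sineMode_add_one s k (y + 1)
  rw [add_sub_cancel_right, add_assoc, one_add_one_eq_two] at recurrence
  unfold gaugedMode
  rw [hopping_mulVec_apply, incoming, outgoing, ← add_mul, ← Complex.ofReal_add, recurrence]
  simp only [gaugedAmplitude, Pi.smul_apply, smul_eq_mul]
  push_cast
  ring

end Gauge

/-- The eigenvalue problem for Feynman's Hamiltonian
`H = -(λ/2) Σ_{x=1}^{s-1} ( U_x ⊗ |x+1⟩⟨x| + U_x⁻¹ ⊗ |x⟩⟨x+1| )` on `ℂ^d ⊗ ℂ^s`: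
for every `r ∈ ℂ^d` and `k ∈ {1,…,s}`, the vector
`|e_k; r⟩ = Σ_{x=1}^{s} v_k(x) (U_{x-1}·…·U_1 r) ⊗ e_x`, where
`v_k(x) = sqrt(2/(s+1)) sin(kπx/(s+1))`, is an eigenvector of `H` with
eigenvalue `e_k = -λ cos(kπ/(s+1))`. Cursor sites are represented 0-based: the
paper's site `x ∈ {1,…,s}` is the index `x - 1 : Fin s`. -/
theorem feynman_eigenvectors (s d : ℕ) (lam : ℝ)
    (U : ℕ → Matrix (Fin d) (Fin d) ℂ)
    (hU : ∀ x, 1 ≤ x → x ≤ s - 1 → U x ∈ Matrix.unitaryGroup (Fin d) ℂ)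
    (r : Fin d → ℂ) (k : ℕ) :
    letI H : Matrix (Fin d × Fin s) (Fin d × Fin s) ℂ :=
      (-(lam / 2) : ℂ) • ∑ x : Fin (s - 1),
        ((U (x.val + 1)) ⊗ₖ
            Matrix.single (⟨x.val + 1, by have := x.isLt; omega⟩ : Fin s)
              (⟨x.val, by have := x.isLt; omega⟩ : Fin s) (1 : ℂ) +
          (U (x.val + 1))⁻¹ ⊗ₖ
            Matrix.single (⟨x.val, by have := x.isLt; omega⟩ : Fin s)
              (⟨x.val + 1, by have := x.isLt; omega⟩ : Fin s) (1 : ℂ))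
    letI ekr : Fin d × Fin s → ℂ := fun p =>
      (Real.sqrt (2 / (s + 1)) * Real.sin (k * π * (p.2.val + 1) / (s + 1)) : ℝ) *
        (prodU U p.2.val).mulVec r p.1
    H.mulVec ekr = ((-lam * Real.cos (k * π / (s + 1)) : ℝ) : ℂ) • ekr := by
  have hdet (x : ℕ) (h₁ : 1 ≤ x) (h₂ : x ≤ s - 1) : IsUnit (U x).det :=
    isUnit_det_of_left_inverse (mem_unitaryGroup_iff'.mp (hU x h₁ h₂))
  change ((-(lam / 2) : ℂ) • hopping s U (fun x => (U x)⁻¹)) *ᵥ gaugedMode U s k r =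
    _ • gaugedMode U s k r
  rw [smul_mulVec, hopping_mulVec_gaugedMode U s k r hdet, smul_smul]
  congr 1
  push_cast
  ring
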